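/- arXiv:2504.06376 — 7 statements merged into one kernel-verified Lean document; each statement's English description precedes it below -/
import Mathlib

section
/- Let S be a finite set of points in the plane with distinct x-coordinates and let L be a vertical line strictly separating S into nonempty left and right parts. Then there is at most one edge of the upper hull of S that intersects L, and such an edge exists whenever both sides are nonempty. -/
open scoped Classical

noncomputable section

/-- Signed area / cross product `(a - o) × (b - o)`. Positive means `b` lies to the
left of the directed line from `o` to `a`; for `o.1 < a.1`, `cross o a b > 0` means
`b` is strictly above the line through `o` and `a`. -/
def cross (o a b : ℝ × ℝ) : ℝ :=
  (a.1 - o.1) * (b.2 - o.2) - (a.2 - o.2) * (b.1 - o.1)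

/-- `q` is a vertex of the upper hull of `S`: `q ∈ S` and `q` is not strictly below
any segment joining two points of `S` on either side of it. -/
def IsUHVertex (S : Finset (ℝ × ℝ)) (q : ℝ × ℝ) : Prop :=
  q ∈ S ∧ ∀ u ∈ S, ∀ v ∈ S, u.1 < q.1 → q.1 < v.1 → 0 ≤ cross u v q

/-- `(a, b)` is an edge of the upper hull of `S`: all points of `S` lie on or below the
line through `a` and `b`, and no point of `S` strictly between them in `x`-coordinate
lies on that line (adjacency). -/
def IsUHEdge (S : Finset (ℝ × ℝ)) (a b : ℝ × ℝ) : Prop :=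
  a ∈ S ∧ b ∈ S ∧ a.1 < b.1 ∧ (∀ s ∈ S, cross a b s ≤ 0) ∧
    ∀ s ∈ S, a.1 < s.1 → s.1 < b.1 → cross a b s < 0

/-- Height at abscissa `c` of the line through `p` and `q`. -/
def lineAt (p q : ℝ × ℝ) (c : ℝ) : ℝ := p.2 + (c - p.1) * (q.2 - p.2) / (q.1 - p.1)

lemma key_identity (a b p q : ℝ × ℝ) (c : ℝ) (hab : a.1 < b.1) (hpq : p.1 < q.1) :
    (b.1 - a.1) * (q.1 - p.1) * (lineAt a b c - lineAt p q c)
      = (q.1 - c) * (-(cross a b p)) + (c - p.1) * (-(cross a b q)) := by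
  have h1 : b.1 - a.1 ≠ 0 := by linarith
  have h2 : q.1 - p.1 ≠ 0 := by linarith
  unfold lineAt cross
  field_simp
  ring

lemma cross_self_right (a b : ℝ × ℝ) : cross a b b = 0 := by unfold cross; ring

lemma cross_self_left (a b : ℝ × ℝ) : cross a b a = 0 := by unfold cross; ring

/-- Common right endpoint comparison. -/
lemma right_endpoint (a b s : ℝ × ℝ) (c : ℝ) (hab : a.1 < b.1) (hsb : s.1 < b.1)
    (hcb : c < b.1) : lineAt s b c ≤ lineAt a b c ↔ cross a b s ≤ 0 := by
  have h := key_identity a b s b c hab hsb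
  rw [cross_self_right] at h
  constructor
  · intro hle
    have hA : 0 ≤ (b.1 - c) * (-(cross a b s)) := by
      nlinarith [mul_nonneg (mul_nonneg (sub_nonneg.2 hab.le) (sub_nonneg.2 hsb.le))
        (sub_nonneg.2 hle)]
    nlinarith [hA, sub_pos.2 hcb]
  · intro hle
    have hA : 0 ≤ (b.1 - c) * (-(cross a b s)) :=
      mul_nonneg (by linarith) (by linarith)
    nlinarith [hA, h, mul_pos (sub_pos.2 hab) (sub_pos.2 hsb)]

lemma right_endpoint_eq (a b s : ℝ × ℝ) (c : ℝ) (hab : a.1 < b.1) (hsb : s.1 < b.1)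
    (h0 : cross a b s = 0) : lineAt s b c = lineAt a b c := by
  have h := key_identity a b s b c hab hsb
  rw [cross_self_right, h0] at h
  have hpos : (0:ℝ) < (b.1 - a.1) * (b.1 - s.1) := by nlinarith
  nlinarith [h, hpos]

/-- Common left endpoint comparison. -/
lemma left_endpoint (a b s : ℝ × ℝ) (c : ℝ) (hab : a.1 < b.1) (has : a.1 < s.1)
    (hac : a.1 < c) : lineAt a s c ≤ lineAt a b c ↔ cross a b s ≤ 0 := by
  have h := key_identity a b a s c hab has
  rw [cross_self_left] at h
  constructor
  · intro hle
    have hA : 0 ≤ (c - a.1) * (-(cross a b s)) := by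
      nlinarith [mul_nonneg (mul_nonneg (sub_nonneg.2 hab.le) (sub_nonneg.2 has.le))
        (sub_nonneg.2 hle)]
    nlinarith [hA, sub_pos.2 hac]
  · intro hle
    have hA : 0 ≤ (c - a.1) * (-(cross a b s)) :=
      mul_nonneg (by linarith) (by linarith)
    nlinarith [hA, h, mul_pos (sub_pos.2 hab) (sub_pos.2 has)]

lemma left_endpoint_eq (a b s : ℝ × ℝ) (c : ℝ) (hab : a.1 < b.1) (has : a.1 < s.1)
    (h0 : cross a b s = 0) : lineAt a s c = lineAt a b c := by
  have h := key_identity a b a s c hab has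
  rw [cross_self_left, h0] at h
  have hpos : (0:ℝ) < (b.1 - a.1) * (s.1 - a.1) := by nlinarith
  nlinarith [h, hpos]

set_option maxHeartbeats 1000000 in
/-- Any two upper-hull edges crossing the vertical line coincide. -/
lemma edges_eq (S : Finset (ℝ × ℝ)) (c : ℝ)
    (hdistinct : ∀ p ∈ S, ∀ q ∈ S, p ≠ q → p.1 ≠ q.1)
    (a b a' b' : ℝ × ℝ)
    (h : IsUHEdge S a b) (h' : IsUHEdge S a' b')
    (hac : a.1 < c) (hcb : c < b.1) (hac' : a'.1 < c) (hcb' : c < b'.1) :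
    a = a' ∧ b = b' := by
  obtain ⟨haS, hbS, hab, hbel, hstr⟩ := h
  obtain ⟨haS', hbS', hab', hbel', hstr'⟩ := h'
  have id1 := key_identity a b a' b' c hab hab'
  have id2 := key_identity a' b' a b c hab' hab
  have c1 : cross a b a' ≤ 0 := hbel a' haS'
  have c2 : cross a b b' ≤ 0 := hbel b' hbS'
  have c3 : cross a' b' a ≤ 0 := hbel' a haS
  have c4 : cross a' b' b ≤ 0 := hbel' b hbS
  have t1 : 0 ≤ (b'.1 - c) * (-(cross a b a')) := mul_nonneg (by linarith) (by linarith)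
  have t2 : 0 ≤ (c - a'.1) * (-(cross a b b')) := mul_nonneg (by linarith) (by linarith)
  have t3 : 0 ≤ (b.1 - c) * (-(cross a' b' a)) := mul_nonneg (by linarith) (by linarith)
  have t4 : 0 ≤ (c - a.1) * (-(cross a' b' b)) := mul_nonneg (by linarith) (by linarith)
  have hR1 : 0 ≤ (b.1 - a.1) * (b'.1 - a'.1) * (lineAt a b c - lineAt a' b' c) := by
    rw [id1]; linarith
  have hR2 : 0 ≤ (b'.1 - a'.1) * (b.1 - a.1) * (lineAt a' b' c - lineAt a b c) := by
    rw [id2]; linarith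
  have hle1 : lineAt a' b' c ≤ lineAt a b c := by
    nlinarith [hR1, mul_pos (sub_pos.2 hab) (sub_pos.2 hab')]
  have hle2 : lineAt a b c ≤ lineAt a' b' c := by
    nlinarith [hR2, mul_pos (sub_pos.2 hab) (sub_pos.2 hab')]
  have heq : lineAt a b c = lineAt a' b' c := le_antisymm hle2 hle1
  rw [heq] at id1
  rw [← heq] at id2
  have hsum1 : (b'.1 - c) * (-(cross a b a')) + (c - a'.1) * (-(cross a b b')) = 0 := by
    linarith [id1]
  have hsum2 : (b.1 - c) * (-(cross a' b' a)) + (c - a.1) * (-(cross a' b' b)) = 0 := by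
    linarith [id2]
  have z1 : cross a b a' = 0 := by nlinarith [hsum1, t1, t2, sub_pos.2 hcb']
  have z2 : cross a b b' = 0 := by nlinarith [hsum1, t1, t2, sub_pos.2 hac']
  have z3 : cross a' b' a = 0 := by nlinarith [hsum2, t3, t4, sub_pos.2 hcb]
  have z4 : cross a' b' b = 0 := by nlinarith [hsum2, t3, t4, sub_pos.2 hac]
  constructor
  · rcases lt_trichotomy a.1 a'.1 with h1 | h1 | h1
    · exact absurd z1 (ne_of_lt (hstr a' haS' h1 (by linarith)))
    · by_contra hne
      exact hdistinct a haS a' haS' hne h1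
    · exact absurd z3 (ne_of_lt (hstr' a haS h1 (by linarith)))
  · rcases lt_trichotomy b.1 b'.1 with h1 | h1 | h1
    · exact absurd z4 (ne_of_lt (hstr' b hbS (by linarith) h1))
    · by_contra hne
      exact hdistinct b hbS b' hbS' hne h1
    · exact absurd z2 (ne_of_lt (hstr b' hbS' (by linarith) h1))

/-- If a vertical line `x = c` strictly separates `S` into nonempty left
and right parts (no point on the line), then there is exactly one edge of the upper
hull of `S` crossing the line; in particular at most one, and one exists since both
sides are nonempty. -/
theorem unique_bridge_edge_crossing_vertical_line
    (S : Finset (ℝ × ℝ)) (c : ℝ)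
    (hdistinct : ∀ p ∈ S, ∀ q ∈ S, p ≠ q → p.1 ≠ q.1)
    (hnotonL : ∀ p ∈ S, p.1 ≠ c)
    (hleft : ∃ p ∈ S, p.1 < c) (hright : ∃ p ∈ S, c < p.1) :
    ∃! e : (ℝ × ℝ) × (ℝ × ℝ), IsUHEdge S e.1 e.2 ∧ e.1.1 < c ∧ c < e.2.1 := by
  classical
  obtain ⟨p0, hp0S, hp0⟩ := hleft
  obtain ⟨q0, hq0S, hq0⟩ := hright
  set T : Finset ((ℝ × ℝ) × (ℝ × ℝ)) :=
    (S ×ˢ S).filter (fun e => e.1.1 < c ∧ c < e.2.1) with hTdef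
  have hmemT : ∀ e : (ℝ × ℝ) × (ℝ × ℝ),
      e ∈ T ↔ e.1 ∈ S ∧ e.2 ∈ S ∧ e.1.1 < c ∧ c < e.2.1 := by
    intro e
    simp [hTdef, Finset.mem_filter, Finset.mem_product, and_assoc]
  have hTne : T.Nonempty := ⟨(p0, q0), (hmemT _).2 ⟨hp0S, hq0S, hp0, hq0⟩⟩
  set M := T.sup' hTne (fun e => lineAt e.1 e.2 c) with hM
  set T' := T.filter (fun e => lineAt e.1 e.2 c = M) with hT'
  have hT'ne : T'.Nonempty := by
    obtain ⟨e, heT, he⟩ := Finset.exists_mem_eq_sup' hTne (fun e => lineAt e.1 e.2 c)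
    exact ⟨e, Finset.mem_filter.2 ⟨heT, he.symm⟩⟩
  obtain ⟨e, heT', hmin⟩ := T'.exists_min_image (fun e => e.2.1 - e.1.1) hT'ne
  have heT : e ∈ T := (Finset.mem_filter.1 heT').1
  have heM : lineAt e.1 e.2 c = M := (Finset.mem_filter.1 heT').2
  obtain ⟨haS, hbS, hac, hcb⟩ := (hmemT e).1 heT
  have hab : e.1.1 < e.2.1 := lt_trans hac hcb
  have hsup : ∀ f ∈ T, lineAt f.1 f.2 c ≤ M := fun f hf =>
    Finset.le_sup' (fun e => lineAt e.1 e.2 c) hf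
  have hbelow : ∀ s ∈ S, cross e.1 e.2 s ≤ 0 := by
    intro s hs
    rcases lt_or_gt_of_ne (hnotonL s hs) with h1 | h1
    · have hmem : (s, e.2) ∈ T := (hmemT _).2 ⟨hs, hbS, h1, hcb⟩
      have := hsup _ hmem
      rw [← heM] at this
      exact (right_endpoint e.1 e.2 s c hab (lt_trans h1 hcb) hcb).1 this
    · have hmem : (e.1, s) ∈ T := (hmemT _).2 ⟨haS, hs, hac, h1⟩
      have := hsup _ hmem
      rw [← heM] at this
      exact (left_endpoint e.1 e.2 s c hab (lt_trans hac h1) hac).1 this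
  have hstrict : ∀ s ∈ S, e.1.1 < s.1 → s.1 < e.2.1 → cross e.1 e.2 s < 0 := by
    intro s hs h1 h2
    rcases lt_or_eq_of_le (hbelow s hs) with h0 | h0
    · exact h0
    exfalso
    rcases lt_or_gt_of_ne (hnotonL s hs) with hsc | hsc
    · have hmem : (s, e.2) ∈ T := (hmemT _).2 ⟨hs, hbS, hsc, hcb⟩
      have heq := right_endpoint_eq e.1 e.2 s c hab h2 h0
      have hmem' : (s, e.2) ∈ T' := Finset.mem_filter.2 ⟨hmem, by
        simpa using heq.trans heM⟩
      have := hmin _ hmem'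
      simp only at this
      linarith
    · have hmem : (e.1, s) ∈ T := (hmemT _).2 ⟨haS, hs, hac, hsc⟩
      have heq := left_endpoint_eq e.1 e.2 s c hab h1 h0
      have hmem' : (e.1, s) ∈ T' := Finset.mem_filter.2 ⟨hmem, by
        simpa using heq.trans heM⟩
      have := hmin _ hmem'
      simp only at this
      linarith
  refine ⟨e, ⟨⟨haS, hbS, hab, hbelow, hstrict⟩, hac, hcb⟩, ?_⟩
  rintro y ⟨hy, hy1, hy2⟩
  obtain ⟨h1, h2⟩ := edges_eq S c hdistinct y.1 y.2 e.1 e.2 hy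
    ⟨haS, hbS, hab, hbelow, hstrict⟩ hy1 hy2 hac hcb
  exact Prod.ext h1 h2
end
end

section
/- If e₁ = (p, q) and e₂ = (q, r) are two consecutive edges encountered while traversing candidate bridge edges from left to right, and the turn from e₁ to e₂ at q is a left turn (i.e., the cross product (q − p) × (r − q) > 0), then q is not a vertex of the upper hull of S. -/
open scoped Classical

noncomputable section

/-- If `p, q, r ∈ S` with `x(p) < x(q) < x(r)` and the turn from `(p, q)`
to `(q, r)` at `q` is a left turn, i.e. `(q − p) × (r − q) > 0`, then `q` is not a
vertex of the upper hull of `S`.  (Note `(q − p) × (r − q) = cross p q r`.) -/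
theorem left_turn_not_upper_hull_vertex
    (S : Finset (ℝ × ℝ))
    (hdistinct : ∀ u ∈ S, ∀ v ∈ S, u ≠ v → u.1 ≠ v.1)
    (p q r : ℝ × ℝ) (hp : p ∈ S) (hq : q ∈ S) (hr : r ∈ S)
    (hx1 : p.1 < q.1) (hx2 : q.1 < r.1)
    (hleft : (q.1 - p.1) * (r.2 - q.2) - (q.2 - p.2) * (r.1 - q.1) > 0) :
    ¬ IsUHVertex S q := by
  rintro ⟨-, h⟩
  have h2 := h p hp r hr hx1 hx2
  simp only [cross] at h2
  nlinarith [h2, hleft]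
end
end

section
/- A finite sequence of points p₁, ..., p_m in the plane with strictly increasing x-coordinates forms the vertex sequence of the upper hull of its point set if and only if every consecutive triple (p_{i−1}, p_i, p_{i+1}) makes a right turn (cross product (p_i − p_{i−1}) × (p_{i+1} − p_i) < 0). -/
/-! For points with increasing `x`-coordinates, the sign of `cross u v w` is the sign of
each of the slope differences `slope(u,w) - slope(u,v)`, `slope(v,w) - slope(u,v)` and
`slope(v,w) - slope(u,w)`. Right turns therefore say that the edge slopes of the chain
decrease, and then, by induction along the chain, the slope of every chord `p a p b` lies
between the slopes of the last and the first edge it spans; this puts every point on or below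
the line of every edge. Conversely, the points `p (i-1)` and `p (i+1)` lying below the edges
at `p i` give `cross ≤ 0`, and general position makes it strict. -/

open scoped Classical

noncomputable section

def segSlope (u v : ℝ × ℝ) : ℝ := (v.2 - u.2) / (v.1 - u.1)

lemma segSlope_comm (u v : ℝ × ℝ) : segSlope u v = segSlope v u := by
  unfold segSlope
  rw [← neg_sub v.2, ← neg_sub v.1, neg_div_neg_eq]

lemma cross_rotate (u v w : ℝ × ℝ) : cross u v w = cross v w u := by
  unfold cross
  ring

lemma cross_eq_mul_segSlope_sub_left {u v w : ℝ × ℝ} (hv : v.1 ≠ u.1) (hw : w.1 ≠ u.1) :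
    cross u v w = (v.1 - u.1) * (w.1 - u.1) * (segSlope u w - segSlope u v) := by
  have hv' : v.1 - u.1 ≠ 0 := sub_ne_zero.2 hv
  have hw' : w.1 - u.1 ≠ 0 := sub_ne_zero.2 hw
  unfold cross segSlope
  field_simp

lemma cross_eq_mul_segSlope_sub_right {u v w : ℝ × ℝ} (hu : w.1 ≠ u.1) (hv : w.1 ≠ v.1) :
    cross u v w = (w.1 - u.1) * (w.1 - v.1) * (segSlope v w - segSlope u w) := by
  rw [cross_rotate, cross_rotate, cross_eq_mul_segSlope_sub_left hu.symm hv.symm,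
    segSlope_comm w u, segSlope_comm w v]
  ring

lemma cross_eq_mul_segSlope_sub_mid {u v w : ℝ × ℝ} (hu : v.1 ≠ u.1) (hw : w.1 ≠ v.1) :
    cross u v w = (v.1 - u.1) * (w.1 - v.1) * (segSlope v w - segSlope u v) := by
  rw [cross_rotate, cross_eq_mul_segSlope_sub_left hw hu.symm, segSlope_comm v u]
  ring

lemma cross_nonpos_iff_segSlope_le_left {u v w : ℝ × ℝ} (hv : u.1 < v.1) (hw : u.1 < w.1) :
    cross u v w ≤ 0 ↔ segSlope u w ≤ segSlope u v := by
  rw [cross_eq_mul_segSlope_sub_left hv.ne' hw.ne', ← sub_nonpos (b := segSlope u v)]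
  simpa using mul_le_mul_iff_right₀ (mul_pos (sub_pos.2 hv) (sub_pos.2 hw))
    (b := segSlope u w - segSlope u v) (c := 0)

lemma cross_nonpos_iff_segSlope_le_right {u v w : ℝ × ℝ} (hu : u.1 < w.1) (hv : v.1 < w.1) :
    cross u v w ≤ 0 ↔ segSlope v w ≤ segSlope u w := by
  rw [cross_eq_mul_segSlope_sub_right hu.ne' hv.ne', ← sub_nonpos (b := segSlope u w)]
  simpa using mul_le_mul_iff_right₀ (mul_pos (sub_pos.2 hu) (sub_pos.2 hv))
    (b := segSlope v w - segSlope u w) (c := 0)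

lemma cross_neg_iff_segSlope_lt_mid {u v w : ℝ × ℝ} (hu : u.1 < v.1) (hw : v.1 < w.1) :
    cross u v w < 0 ↔ segSlope v w < segSlope u v := by
  rw [cross_eq_mul_segSlope_sub_mid hu.ne' hw.ne', ← sub_neg (b := segSlope u v)]
  simpa using mul_lt_mul_iff_right₀ (mul_pos (sub_pos.2 hu) (sub_pos.2 hw))
    (b := segSlope v w - segSlope u v) (c := 0)

lemma cross_nonpos_iff_segSlope_le_mid {u v w : ℝ × ℝ} (hu : u.1 < v.1) (hw : v.1 < w.1) :
    cross u v w ≤ 0 ↔ segSlope v w ≤ segSlope u v := by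
  rw [cross_eq_mul_segSlope_sub_mid hu.ne' hw.ne', ← sub_nonpos (b := segSlope u v)]
  simpa using mul_le_mul_iff_right₀ (mul_pos (sub_pos.2 hu) (sub_pos.2 hw))
    (b := segSlope v w - segSlope u v) (c := 0)

lemma segSlope_chord_mem_Icc {m : ℕ} {p : ℕ → ℝ × ℝ}
    (hx : ∀ i j : ℕ, i < j → j < m → (p i).1 < (p j).1)
    (hanti : ∀ k : ℕ, k + 2 < m →
      segSlope (p (k + 1)) (p (k + 2)) ≤ segSlope (p k) (p (k + 1)))
    {a b : ℕ} (hab : a ≤ b) (hb : b + 1 < m) :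
    segSlope (p a) (p (b + 1)) ∈
      Set.Icc (segSlope (p b) (p (b + 1))) (segSlope (p a) (p (a + 1))) := by
  induction b, hab using Nat.le_induction with
  | base => exact Set.left_mem_Icc.2 le_rfl
  | succ b hab ih =>
    obtain ⟨ih_last, ih_first⟩ := ih (by omega)
    have hab' : (p a).1 < (p (b + 1)).1 := hx _ _ (by omega) (by omega)
    have hb' : (p (b + 1)).1 < (p (b + 2)).1 := hx _ _ (by omega) hb
    have hturn : cross (p a) (p (b + 1)) (p (b + 2)) ≤ 0 :=
      (cross_nonpos_iff_segSlope_le_mid hab' hb').2 ((hanti b hb).trans ih_last)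
    exact ⟨(cross_nonpos_iff_segSlope_le_right (hab'.trans hb') hb').1 hturn,
      ((cross_nonpos_iff_segSlope_le_left hab' (hab'.trans hb')).1 hturn).trans ih_first⟩

theorem upper_hull_chain_iff_right_turns_general
    (m : ℕ) (p : ℕ → ℝ × ℝ)
    (hmono : ∀ i j : ℕ, i < j → j < m → (p i).1 < (p j).1)
    (hgen : ∀ i j k : ℕ, i < j → j < k → k < m → cross (p i) (p j) (p k) ≠ 0) :
    (∀ i : ℕ, i + 1 < m → ∀ j : ℕ, j < m → cross (p i) (p (i + 1)) (p j) ≤ 0) ↔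
      (∀ i : ℕ, 1 ≤ i → i + 1 < m → cross (p (i - 1)) (p i) (p (i + 1)) < 0) := by
  constructor
  · intro hbelow i hi him
    obtain ⟨k, rfl⟩ : ∃ k, i = k + 1 := ⟨i - 1, by omega⟩
    exact (hbelow k (by omega) (k + 2) him).lt_of_ne
      (hgen k (k + 1) (k + 2) (by omega) (by omega) him)
  · intro hturn
    have hanti : ∀ k : ℕ, k + 2 < m →
        segSlope (p (k + 1)) (p (k + 2)) ≤ segSlope (p k) (p (k + 1)) := fun k hk =>
      ((cross_neg_iff_segSlope_lt_mid (hmono _ _ (by omega) (by omega)) (hmono _ _ (by omega) hk)).1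
        (hturn (k + 1) (by omega) hk)).le
    intro i hi j hj
    have hi' : (p i).1 < (p (i + 1)).1 := hmono _ _ (by omega) hi
    rcases le_or_gt j i with hji | hij
    · have hj' : (p j).1 < (p (i + 1)).1 := hmono _ _ (by omega) hi
      rw [cross_rotate, cross_rotate, cross_nonpos_iff_segSlope_le_right hj' hi']
      exact (segSlope_chord_mem_Icc hmono hanti hji hi).1
    · obtain ⟨b, rfl⟩ : ∃ b, j = b + 1 := ⟨j - 1, by omega⟩
      have hj' : (p i).1 < (p (b + 1)).1 := hmono _ _ (by omega) hj
      rw [cross_nonpos_iff_segSlope_le_left hi' hj']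
      exact (segSlope_chord_mem_Icc hmono hanti (by omega) hj).2

/-- A finite sequence `p 0, …, p (m-1)` of points with strictly increasing
`x`-coordinates (no three collinear) is the vertex sequence of the upper hull of its
point set (i.e. every point lies on or below each segment `p i, p (i+1)`) iff every
consecutive triple makes a right turn. -/
theorem upper_hull_chain_iff_right_turns
    (m : ℕ) (hm : 2 ≤ m) (p : ℕ → ℝ × ℝ)
    (hmono : ∀ i j : ℕ, i < j → j < m → (p i).1 < (p j).1)
    (hgen : ∀ i j k : ℕ, i < j → j < k → k < m → cross (p i) (p j) (p k) ≠ 0) :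
    (∀ i : ℕ, i + 1 < m → ∀ j : ℕ, j < m → cross (p i) (p (i + 1)) (p j) ≤ 0) ↔
      (∀ i : ℕ, 1 ≤ i → i + 1 < m → cross (p (i - 1)) (p i) (p (i + 1)) < 0) :=
  upper_hull_chain_iff_right_turns_general m p hmono hgen
end
end

section
/- Jarvis march step correctness: let S be a finite set of points, and let p, q be consecutive vertices of the convex hull of S in clockwise order. Then the point r ∈ S \ {q} that maximizes the clockwise angle between (p, q) and (q, r) is the next vertex of the convex hull after q in clockwise order. -/
/-!
All points of `S` other than `p` and `q` lie strictly on one side of the line `pq`, and on that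
side the angle `∠ p q s` increases strictly as the ray `q → s` turns away from `q → p`. Hence
if some `s` lay on the wrong side of the line `qr`, it would make a larger angle than the
maximizer `r`. So all points other than `q` and `r` lie strictly on one side of `qr`, which makes `r` a hull vertex: `{q}` together with an open
half-plane bounded by a line through `q` is convex, and it misses `r`. Two distinct maximizers
would each lie strictly on that side of the line through `q` and the other one, which the
antisymmetry of the cross product forbids.
-/

open scoped Classical

noncomputable section

/-- Cross product `(a − o) × (b − o)` in the Euclidean plane. -/
def cross2 (o a b : EuclideanSpace ℝ (Fin 2)) : ℝ :=
  (a 0 - o 0) * (b 1 - o 1) - (a 1 - o 1) * (b 0 - o 0)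

/-- `v` is a vertex of the convex hull of `S`. -/
def IsHullVertex (S : Finset (EuclideanSpace ℝ (Fin 2)))
    (v : EuclideanSpace ℝ (Fin 2)) : Prop :=
  v ∈ S ∧ v ∉ convexHull ℝ ((S : Set (EuclideanSpace ℝ (Fin 2))) \ {v})

/-- `r` immediately follows `q` in the clockwise traversal of the hull of `S`:
both are hull vertices and all other points of `S` lie strictly to one side of the
directed line `q → r` (the side corresponding to the clockwise traversal, i.e.
`cross2 q r s > 0` in the paper's convention). -/
def CWNext (S : Finset (EuclideanSpace ℝ (Fin 2)))
    (q r : EuclideanSpace ℝ (Fin 2)) : Prop :=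
  IsHullVertex S q ∧ IsHullVertex S r ∧
    ∀ s ∈ S, s ≠ q → s ≠ r → 0 < cross2 q r s

open EuclideanGeometry
open scoped RealInnerProductSpace

local notation "E" => EuclideanSpace ℝ (Fin 2)

-- `(c, s) / X` and `(c', s') / Y` are unit vectors in the open upper half-plane and the first
-- one is clockwise from the second, so its first coordinate (the cosine) is larger.
theorem div_lt_div_of_sq_eq_sq_add_sq {c s c' s' X Y : ℝ} (hX : 0 < X) (hY : 0 < Y)
    (hs : 0 < s) (hs' : 0 < s') (hX2 : X ^ 2 = c ^ 2 + s ^ 2) (hY2 : Y ^ 2 = c' ^ 2 + s' ^ 2)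
    (h : c' * s < c * s') : c' / Y < c / X := by
  have hcc' : c * c' ≤ X * Y :=
    calc c * c' ≤ |c| * |c'| := by rw [← abs_mul]; exact le_abs_self _
      _ ≤ X * Y := mul_le_mul (abs_le_of_sq_le_sq (by nlinarith) hX.le)
          (abs_le_of_sq_le_sq (by nlinarith) hY.le) (abs_nonneg _) hX.le
  have key : (c * Y - c' * X) * (s * Y + s' * X)
      = (c * s' - c' * s) * (X * Y - c * c' + s * s') := by
    linear_combination (c * s) * hY2 - (c' * s') * hX2
  have hpos : 0 < (c * Y - c' * X) * (s * Y + s' * X) := by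
    rw [key]; exact mul_pos (by linarith) (by nlinarith [mul_pos hs hs'])
  rw [div_lt_div_iff₀ hY hX]
  linarith [pos_of_mul_pos_left hpos (by positivity)]

theorem cross2_swap (o a b : E) : cross2 o b a = -cross2 o a b := by
  unfold cross2; ring

theorem cross2_rotate (o a b : E) : cross2 a b o = cross2 o a b := by
  unfold cross2; ring

theorem cross2_eq_zero_of_collinear {a b c : E} (h : Collinear ℝ {a, b, c}) :
    cross2 a b c = 0 := by
  obtain ⟨v, hv⟩ := (collinear_iff_of_mem (Set.mem_insert a _)).1 h
  obtain ⟨t, rfl⟩ := hv b (by simp)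
  obtain ⟨t', rfl⟩ := hv c (by simp)
  simp only [cross2, vadd_eq_add, PiLp.add_apply, PiLp.smul_apply, smul_eq_mul]
  ring

theorem real_inner_fin_two (x y : E) : ⟪x, y⟫ = x 0 * y 0 + x 1 * y 1 := by
  simp [PiLp.inner_apply, Fin.sum_univ_two, mul_comm]

theorem norm_sq_fin_two (x : E) : ‖x‖ ^ 2 = x 0 ^ 2 + x 1 ^ 2 := by
  rw [← real_inner_self_eq_norm_sq, real_inner_fin_two]; ring

theorem sq_norm_vsub_mul_norm_vsub (p q u : E) :
    (‖p -ᵥ q‖ * ‖u -ᵥ q‖) ^ 2 = ⟪p -ᵥ q, u -ᵥ q⟫ ^ 2 + cross2 p q u ^ 2 := by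
  simp only [mul_pow, norm_sq_fin_two, real_inner_fin_two, cross2, vsub_eq_sub, PiLp.sub_apply]
  ring

theorem angle_lt_angle_of_cross2 {p q u v : E} (hu : 0 < cross2 p q u) (hv : 0 < cross2 p q v)
    (huv : cross2 q u v < 0) : ∠ p q u < ∠ p q v := by
  have hpq : 0 < ‖p -ᵥ q‖ :=
    norm_pos_iff.2 (vsub_ne_zero.2 (by rintro rfl; simp [cross2] at hu))
  have hpos : ∀ x, 0 < cross2 p q x → 0 < ‖p -ᵥ q‖ * ‖x -ᵥ q‖ := by
    refine fun x hx => mul_pos hpq (norm_pos_iff.2 (vsub_ne_zero.2 ?_))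
    rintro rfl
    linarith [show cross2 p x x = 0 by unfold cross2; ring]
  have hident : ‖p -ᵥ q‖ ^ 2 * -cross2 q u v
      = ⟪p -ᵥ q, u -ᵥ q⟫ * cross2 p q v - ⟪p -ᵥ q, v -ᵥ q⟫ * cross2 p q u := by
    simp only [norm_sq_fin_two, real_inner_fin_two, cross2, vsub_eq_sub, PiLp.sub_apply]
    ring
  refine Real.arccos_lt_arccos (neg_le_of_abs_le (abs_real_inner_div_norm_mul_norm_le_one _ _))
    (div_lt_div_of_sq_eq_sq_add_sq (hpos u hu) (hpos v hv) hu hv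
      (sq_norm_vsub_mul_norm_vsub p q u) (sq_norm_vsub_mul_norm_vsub p q v) ?_)
    (le_of_abs_le (abs_real_inner_div_norm_mul_norm_le_one _ _))
  have : 0 < ‖p -ᵥ q‖ ^ 2 * -cross2 q u v :=
    mul_pos (pow_pos hpq 2) (neg_pos.2 huv)
  linarith

theorem angle_pos_of_cross2_ne_zero {p q s : E} (h : cross2 p q s ≠ 0) : 0 < ∠ p q s :=
  angle_pos_of_not_collinear fun hcol => h (cross2_eq_zero_of_collinear hcol)

theorem convex_insert_setOf_lt {V : Type*} [AddCommGroup V] [Module ℝ V] {q : V}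
    (f : V →ₗ[ℝ] ℝ) : Convex ℝ (insert q {x | f q < f x}) := by
  have hcombo : ∀ {x y : V} {a b : ℝ}, 0 ≤ a → 0 < b → a + b = 1 → f q ≤ f x → f q < f y →
      f q < f (a • x + b • y) := by
    intro x y a b ha hb hab hx hy
    have hq : f q = a * f q + b * f q := by rw [← add_mul, hab, one_mul]
    simp only [map_add, map_smul, smul_eq_mul]
    nlinarith [mul_le_mul_of_nonneg_left hx ha, mul_lt_mul_of_pos_left hy hb]
  rintro x (rfl | hx) y (rfl | hy) a b ha hb hab
  · exact Or.inl (Convex.combo_self hab _)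
  · rcases hb.eq_or_lt with rfl | hb
    · left; simp_all
    · exact Or.inr (hcombo ha hb hab le_rfl hy)
  · rcases ha.eq_or_lt with rfl | ha
    · left; simp_all
    · exact Or.inr (add_comm (a • x) _ ▸ hcombo hb ha (add_comm a b ▸ hab) le_rfl hx)
  · rcases ha.eq_or_lt with rfl | ha
    · right; simp_all
    · exact Or.inr (add_comm (a • x) _ ▸ hcombo hb ha (add_comm a b ▸ hab) hy.le hx)

theorem isHullVertex_of_forall_cross2_pos {S : Finset E} {q r : E} (hr : r ∈ S)
    (hqr : q ≠ r) (h : ∀ s ∈ S, s ≠ q → s ≠ r → 0 < cross2 q r s) : IsHullVertex S r := by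
  refine ⟨hr, fun hmem => ?_⟩
  let f : E →ₗ[ℝ] ℝ :=
    ((r 0 - q 0) • EuclideanSpace.proj 1 - (r 1 - q 1) • EuclideanSpace.proj 0 : E →L[ℝ] ℝ)
  have hf : ∀ s, cross2 q r s = f s - f q := by
    intro s; simp [f, cross2]; ring
  have hsub : (S : Set E) \ {r} ⊆ insert q {x | f q < f x} := by
    rintro s ⟨hs, hsr⟩
    by_cases hsq : s = q
    · exact Or.inl hsq
    · exact Or.inr (show f q < f s by linarith [h s hs hsq hsr, hf s])
  rcases convexHull_min hsub (convex_insert_setOf_lt f) hmem with hrq | hrq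
  · exact hqr hrq.symm
  · have : cross2 q r r = 0 := by unfold cross2; ring
    linarith [hf r, show f q < f r from hrq]

theorem cross2_pos_of_forall_angle_le {S : Finset E}
    (hgen : ∀ a ∈ S, ∀ b ∈ S, ∀ c ∈ S, a ≠ b → b ≠ c → a ≠ c → cross2 a b c ≠ 0)
    {p q r : E} (hq : q ∈ S) (hside : ∀ s ∈ S, s ≠ p → s ≠ q → 0 < cross2 p q s)
    (hr : r ∈ S) (hrq : r ≠ q) (hmax : ∀ s ∈ S, s ≠ q → ∠ p q s ≤ ∠ p q r) :
    ∀ s ∈ S, s ≠ q → s ≠ r → 0 < cross2 q r s := by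
  intro s hs hsq hsr
  refine (hgen q hq r hr s hs hrq.symm hsr.symm hsq.symm).lt_or_gt.resolve_left fun hneg => ?_
  by_cases hrp : r = p
  · subst hrp
    have : 0 < ∠ r q s := angle_pos_of_cross2_ne_zero
      (hgen r hr q hq s hs hrq hsq.symm fun h => hsr h.symm)
    linarith [hmax s hs hsq, angle_self_of_ne hrq]
  by_cases hsp : s = p
  · subst hsp
    linarith [hside r hr hrp hrq, cross2_rotate s q r]
  · linarith [hmax s hs hsq,
      angle_lt_angle_of_cross2 (hside r hr hrp hrq) (hside s hs hsp hsq) hneg]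

/-- Jarvis march step correctness: if `p, q` are consecutive clockwise
hull vertices of `S` (no three points collinear), then a point `r ∈ S \ {q}`
maximizing the angle `∠ p q r` over all `s ∈ S \ {q}` is the next hull vertex after
`q` in clockwise order, and the maximizer is unique. -/
theorem jarvis_march_step
    (S : Finset (EuclideanSpace ℝ (Fin 2)))
    (hgen : ∀ a ∈ S, ∀ b ∈ S, ∀ c ∈ S, a ≠ b → b ≠ c → a ≠ c → cross2 a b c ≠ 0)
    (p q : EuclideanSpace ℝ (Fin 2)) (hpq : CWNext S p q)
    (r : EuclideanSpace ℝ (Fin 2)) (hr : r ∈ S) (hrq : r ≠ q)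
    (hmax : ∀ s ∈ S, s ≠ q → EuclideanGeometry.angle p q s ≤ EuclideanGeometry.angle p q r) :
    CWNext S q r ∧
      ∀ r' ∈ S, r' ≠ q →
        (∀ s ∈ S, s ≠ q → EuclideanGeometry.angle p q s ≤ EuclideanGeometry.angle p q r') →
        r' = r := by
  obtain ⟨-, hqv, hside⟩ := hpq
  have hnext t := cross2_pos_of_forall_angle_le (r := t) hgen hqv.1 hside
  have hr_next := hnext r hr hrq hmax
  refine ⟨⟨hqv, isHullVertex_of_forall_cross2_pos hr hrq.symm hr_next, hr_next⟩,
    fun r' hr' hr'q hmax' => ?_⟩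
  by_contra hne
  linarith [hr_next r' hr' hr'q hne, hnext r' hr' hr'q hmax' r hr hrq (Ne.symm hne),
    cross2_swap q r r']
end
end

section
/- Divide-and-conquer hull merge correctness: let S be split by a vertical line L into S₁ (left) and S₂ (right), and let (u, v) with u ∈ S₁, v ∈ S₂ be the bridge edge of the upper hull of S crossing L. Then the upper hull of S equals the portion of the upper hull of S₁ from its leftmost point to u, followed by the edge (u, v), followed by the portion of the upper hull of S₂ from v to its rightmost point. -/
open scoped Classical

noncomputable section

/-- If all of the relevant points lie on or below the line through `a` and `b`, and
`r` lies on that line with `p.1 < r.1 < q.1`, then `r` is on or above segment `pq`. -/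
lemma vertexA (a b p q r : ℝ × ℝ) (h1 : a.1 < b.1)
    (hp : cross a b p ≤ 0) (hq : cross a b q ≤ 0) (hr : cross a b r = 0)
    (h2 : p.1 < r.1) (h3 : r.1 < q.1) : 0 ≤ cross p q r := by
  have key : (b.1 - a.1) * cross p q r =
      (r.1 - p.1) * (-cross a b q) + (q.1 - r.1) * (-cross a b p)
        + (q.1 - p.1) * cross a b r := by
    unfold cross; ring
  have t1 : 0 ≤ (r.1 - p.1) * (-cross a b q) :=
    mul_nonneg (by linarith) (by linarith)
  have t2 : 0 ≤ (q.1 - r.1) * (-cross a b p) :=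
    mul_nonneg (by linarith) (by linarith)
  nlinarith [key, t1, t2, hr]

lemma keyL (a b u v s : ℝ × ℝ) (h1 : a.1 < b.1) (h2 : u.1 < v.1)
    (h3 : a.1 < u.1) (h4 : u.1 < s.1)
    (hA : cross a b u ≤ 0) (hB : cross u v a ≤ 0) (hC : cross u v s ≤ 0) :
    cross a b s ≤ 0 := by
  have key : (v.1 - u.1) * (u.1 - a.1) * (-cross a b s) =
      (v.1 - u.1) * (s.1 - a.1) * (-cross a b u)
        + (s.1 - u.1) * (b.1 - a.1) * (-cross u v a)
        + (u.1 - a.1) * (b.1 - a.1) * (-cross u v s) := by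
    unfold cross; ring
  have t1 : 0 ≤ (v.1 - u.1) * (s.1 - a.1) * (-cross a b u) :=
    mul_nonneg (mul_nonneg (by linarith) (by linarith)) (by linarith)
  have t2 : 0 ≤ (s.1 - u.1) * (b.1 - a.1) * (-cross u v a) :=
    mul_nonneg (mul_nonneg (by linarith) (by linarith)) (by linarith)
  have t3 : 0 ≤ (u.1 - a.1) * (b.1 - a.1) * (-cross u v s) :=
    mul_nonneg (mul_nonneg (by linarith) (by linarith)) (by linarith)
  nlinarith [key, t1, t2, t3, mul_pos (show (0:ℝ) < v.1 - u.1 by linarith)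
    (show (0:ℝ) < u.1 - a.1 by linarith)]

lemma keyR (a b u v s : ℝ × ℝ) (h1 : a.1 < b.1) (h2 : u.1 < v.1)
    (h3 : v.1 < b.1) (h4 : s.1 < v.1)
    (hV : cross a b v ≤ 0) (hB : cross u v b ≤ 0) (hC : cross u v s ≤ 0) :
    cross a b s ≤ 0 := by
  have key : (v.1 - u.1) * (b.1 - v.1) * (-cross a b s) =
      (v.1 - u.1) * (b.1 - s.1) * (-cross a b v)
        + (v.1 - s.1) * (b.1 - a.1) * (-cross u v b)
        + (b.1 - v.1) * (b.1 - a.1) * (-cross u v s) := by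
    unfold cross; ring
  have t1 : 0 ≤ (v.1 - u.1) * (b.1 - s.1) * (-cross a b v) :=
    mul_nonneg (mul_nonneg (by linarith) (by linarith)) (by linarith)
  have t2 : 0 ≤ (v.1 - s.1) * (b.1 - a.1) * (-cross u v b) :=
    mul_nonneg (mul_nonneg (by linarith) (by linarith)) (by linarith)
  have t3 : 0 ≤ (b.1 - v.1) * (b.1 - a.1) * (-cross u v s) :=
    mul_nonneg (mul_nonneg (by linarith) (by linarith)) (by linarith)
  nlinarith [key, t1, t2, t3, mul_pos (show (0:ℝ) < v.1 - u.1 by linarith)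
    (show (0:ℝ) < b.1 - v.1 by linarith)]

/-- Divide-and-conquer hull merge correctness: let a vertical line
`x = c` split `S` into nonempty `S₁` (left) and `S₂` (right) with no point on the
line, no three points collinear, and let `(u, v)` with `u ∈ S₁`, `v ∈ S₂` be the
bridge edge of the upper hull of `S`.  Then the edges of the upper hull of `S` are
exactly: the edges of the upper hull of `S₁` lying left of (or ending at) `u`,
the bridge `(u, v)`, and the edges of the upper hull of `S₂` lying right of
(or starting at) `v`. -/
theorem hull_merge_correctness
    (S : Finset (ℝ × ℝ)) (c : ℝ)
    (hdistinct : ∀ p ∈ S, ∀ q ∈ S, p ≠ q → p.1 ≠ q.1)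
    (hgen : ∀ p ∈ S, ∀ q ∈ S, ∀ r ∈ S, p ≠ q → q ≠ r → p ≠ r → cross p q r ≠ 0)
    (hnotonL : ∀ p ∈ S, p.1 ≠ c)
    (S₁ S₂ : Finset (ℝ × ℝ))
    (hS₁ : S₁ = S.filter (fun p => p.1 < c)) (hS₂ : S₂ = S.filter (fun p => c < p.1))
    (h₁ : S₁.Nonempty) (h₂ : S₂.Nonempty)
    (u v : ℝ × ℝ) (hu : u ∈ S₁) (hv : v ∈ S₂) (huv : IsUHEdge S u v) :
    ∀ a b : ℝ × ℝ, IsUHEdge S a b ↔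
      ((IsUHEdge S₁ a b ∧ b.1 ≤ u.1) ∨ (a = u ∧ b = v) ∨
        (IsUHEdge S₂ a b ∧ v.1 ≤ a.1)) := by
  subst hS₁; subst hS₂
  have huS : u ∈ S := (Finset.mem_filter.mp hu).1
  have hu1c : u.1 < c := (Finset.mem_filter.mp hu).2
  have hvS : v ∈ S := (Finset.mem_filter.mp hv).1
  have hv1c : c < v.1 := (Finset.mem_filter.mp hv).2
  obtain ⟨huS', hvS', huvlt, hbel, hstr⟩ := huv
  have hu0 : cross u v u = 0 := by unfold cross; ring
  have hv0 : cross u v v = 0 := by unfold cross; ring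
  intro a b
  constructor
  · rintro ⟨haS, hbS, hab, hbel', hstr'⟩
    have hca0 : cross a b a = 0 := by unfold cross; ring
    have hcb0 : cross a b b = 0 := by unfold cross; ring
    rcases lt_or_gt_of_ne (hnotonL a haS) with hac | hac
    · rcases lt_or_gt_of_ne (hnotonL b hbS) with hbc | hbc
      · -- both left of c
        left
        refine ⟨⟨Finset.mem_filter.mpr ⟨haS, hac⟩, Finset.mem_filter.mpr ⟨hbS, hbc⟩, hab,
          fun s hs => hbel' s (Finset.mem_filter.mp hs).1,
          fun s hs h1 h2 => hstr' s (Finset.mem_filter.mp hs).1 h1 h2⟩, ?_⟩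
        by_contra hle
        push_neg at hle
        have hbv : b.1 < v.1 := lt_trans hbc hv1c
        have h1 : cross u v b < 0 := hstr b hbS hle hbv
        have h2 : 0 ≤ cross u v b :=
          vertexA a b u v b hab (hbel' u huS) (hbel' v hvS) hcb0 hle hbv
        linarith
      · -- bridge
        right; left
        have ha_u : a = u := by
          by_contra hne
          rcases lt_or_gt_of_ne (hdistinct a haS u huS hne) with h1 | h1
          · have hub : u.1 < b.1 := lt_trans hu1c hbc
            have w1 : cross a b u < 0 := hstr' u huS h1 hub
            have w2 : 0 ≤ cross a b u :=
              vertexA u v a b u huvlt (hbel a haS) (hbel b hbS) hu0 h1 hub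
            linarith
          · have hav : a.1 < v.1 := lt_trans hac hv1c
            have w1 : cross u v a < 0 := hstr a haS h1 hav
            have w2 : 0 ≤ cross u v a :=
              vertexA a b u v a hab (hbel' u huS) (hbel' v hvS) hca0 h1 hav
            linarith
        have hb_v : b = v := by
          by_contra hne
          rcases lt_or_gt_of_ne (hdistinct b hbS v hvS hne) with h1 | h1
          · have hub : u.1 < b.1 := lt_trans hu1c hbc
            have w1 : cross u v b < 0 := hstr b hbS hub h1
            have w2 : 0 ≤ cross u v b :=
              vertexA a b u v b hab (hbel' u huS) (hbel' v hvS) hcb0 hub h1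
            linarith
          · have hav : a.1 < v.1 := lt_trans hac hv1c
            have w1 : cross a b v < 0 := hstr' v hvS hav h1
            have w2 : 0 ≤ cross a b v :=
              vertexA u v a b v huvlt (hbel a haS) (hbel b hbS) hv0 hav h1
            linarith
        exact ⟨ha_u, hb_v⟩
    · -- both right of c
      have hbc : c < b.1 := lt_trans hac hab
      right; right
      refine ⟨⟨Finset.mem_filter.mpr ⟨haS, hac⟩, Finset.mem_filter.mpr ⟨hbS, hbc⟩, hab,
        fun s hs => hbel' s (Finset.mem_filter.mp hs).1,
        fun s hs h1 h2 => hstr' s (Finset.mem_filter.mp hs).1 h1 h2⟩, ?_⟩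
      by_contra hle
      push_neg at hle
      have hua : u.1 < a.1 := lt_trans hu1c hac
      have w1 : cross u v a < 0 := hstr a haS hua hle
      have w2 : 0 ≤ cross u v a :=
        vertexA a b u v a hab (hbel' u huS) (hbel' v hvS) hca0 hua hle
      linarith
  · rintro (⟨⟨haS₁, hbS₁, hab, hbel1, hstr1⟩, hbu⟩ | ⟨rfl, rfl⟩ |
      ⟨⟨haS₂, hbS₂, hab, hbel2, hstr2⟩, hva⟩)
    · -- left chain edge
      have haS : a ∈ S := (Finset.mem_filter.mp haS₁).1
      have hbS : b ∈ S := (Finset.mem_filter.mp hbS₁).1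
      have hb1c : b.1 < c := (Finset.mem_filter.mp hbS₁).2
      refine ⟨haS, hbS, hab, ?_, ?_⟩
      · intro s hsS
        rcases lt_or_gt_of_ne (hnotonL s hsS) with hs | hs
        · exact hbel1 s (Finset.mem_filter.mpr ⟨hsS, hs⟩)
        · exact keyL a b u v s hab huvlt (lt_of_lt_of_le hab hbu)
            (lt_trans hu1c hs) (hbel1 u hu) (hbel a haS) (hbel s hsS)
      · intro s hsS h1 h2
        exact hstr1 s (Finset.mem_filter.mpr ⟨hsS, lt_trans h2 hb1c⟩) h1 h2
    · -- bridge
      exact ⟨huS', hvS', huvlt, hbel, hstr⟩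
    · -- right chain edge
      have haS : a ∈ S := (Finset.mem_filter.mp haS₂).1
      have hbS : b ∈ S := (Finset.mem_filter.mp hbS₂).1
      have ha1c : c < a.1 := (Finset.mem_filter.mp haS₂).2
      refine ⟨haS, hbS, hab, ?_, ?_⟩
      · intro s hsS
        rcases lt_or_gt_of_ne (hnotonL s hsS) with hs | hs
        · exact keyR a b u v s hab huvlt (lt_of_le_of_lt hva hab)
            (lt_trans hs hv1c) (hbel2 v hv) (hbel b hbS) (hbel s hsS)
        · exact hbel2 s (Finset.mem_filter.mpr ⟨hsS, hs⟩)
      · intro s hsS h1 h2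
        exact hstr2 s (Finset.mem_filter.mpr ⟨hsS, lt_trans ha1c h1⟩) h1 h2
end
end

section
/- The bridge edge is the common tangent: with S, S₁, S₂, and bridge (u, v) as above, every point of S₁ ∪ S₂ lies on or below the line through u and v, and u is a vertex of the upper hull of S₁ while v is a vertex of the upper hull of S₂. -/
open scoped Classical

noncomputable section

/-- The bridge edge is the common tangent: if a vertical line `x = c`
splits `S` into nonempty `S₁` (left) and `S₂` (right) and `(u, v)` is the edge of the
upper hull of `S` with `u ∈ S₁`, `v ∈ S₂`, then every point of `S₁ ∪ S₂` lies on or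
below the line through `u` and `v`, `u` is a vertex of the upper hull of `S₁`, and
`v` is a vertex of the upper hull of `S₂`. -/
theorem bridge_is_common_tangent
    (S : Finset (ℝ × ℝ)) (c : ℝ)
    (hdistinct : ∀ p ∈ S, ∀ q ∈ S, p ≠ q → p.1 ≠ q.1)
    (hnotonL : ∀ p ∈ S, p.1 ≠ c)
    (S₁ S₂ : Finset (ℝ × ℝ))
    (hS₁ : S₁ = S.filter (fun p => p.1 < c)) (hS₂ : S₂ = S.filter (fun p => c < p.1))
    (h₁ : S₁.Nonempty) (h₂ : S₂.Nonempty)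
    (u v : ℝ × ℝ) (hu : u ∈ S₁) (hv : v ∈ S₂) (huv : IsUHEdge S u v) :
    (∀ p ∈ S₁ ∪ S₂, cross u v p ≤ 0) ∧ IsUHVertex S₁ u ∧ IsUHVertex S₂ v := by

  obtain ⟨huS, hvS, huvx, hall, hstrict⟩ := huv
  rw [hS₁] at hu; rw [hS₂] at hv
  obtain ⟨huS', huc⟩ := Finset.mem_filter.mp hu
  obtain ⟨hvS', hvc⟩ := Finset.mem_filter.mp hv
  refine ⟨?_, ⟨hS₁ ▸ hu, ?_⟩, ⟨hS₂ ▸ hv, ?_⟩⟩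
  · intro p hp
    rcases Finset.mem_union.mp hp with h | h
    · exact hall p (Finset.mem_of_mem_filter p (hS₁ ▸ h))
    · exact hall p (Finset.mem_of_mem_filter p (hS₂ ▸ h))
  · intro a ha b hb hau hub
    rw [hS₁] at ha hb
    obtain ⟨haS, hac⟩ := Finset.mem_filter.mp ha
    obtain ⟨hbS, hbc⟩ := Finset.mem_filter.mp hb
    have hA : cross u v a ≤ 0 := hall a haS
    have hB : cross u v b < 0 := hstrict b hbS hub (lt_trans hbc hvc)
    have hid : cross a b u * (v.1 - u.1)
        = (u.1 - b.1) * cross u v a + (a.1 - u.1) * cross u v b := by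
      simp only [cross]; ring
    nlinarith [mul_nonneg (le_of_lt (sub_pos.mpr hub)) (neg_nonneg.mpr hA),
      mul_pos (sub_pos.mpr hau) (neg_pos.mpr hB), sub_pos.mpr huvx]
  · intro a ha b hb hav hvb
    rw [hS₂] at ha hb
    obtain ⟨haS, hac⟩ := Finset.mem_filter.mp ha
    obtain ⟨hbS, hbc⟩ := Finset.mem_filter.mp hb
    have hA : cross u v a < 0 := hstrict a haS (lt_trans huc hac) hav
    have hB : cross u v b ≤ 0 := hall b hbS
    have hid : cross a b v * (v.1 - u.1)
        = (v.1 - b.1) * cross u v a + (a.1 - v.1) * cross u v b := by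
      simp only [cross]; ring
    nlinarith [mul_pos (sub_pos.mpr hvb) (neg_pos.mpr hA),
      mul_nonneg (le_of_lt (sub_pos.mpr hav)) (neg_nonneg.mpr hB), sub_pos.mpr huvx]
end
end

section
/- Upper hull vertices are exactly the points not strictly below the hull chain: p ∈ S is a vertex of the upper hull of S iff there do not exist u, v ∈ S with x(u) < x(p) < x(v) such that p lies strictly below the segment uv. -/
open scoped Classical

noncomputable section

/-- Upper hull vertices are exactly the points not strictly below the
hull chain: for `S` with distinct `x`-coordinates and no three collinear, `p ∈ S` is
a vertex of the upper hull of `S` (an extreme point of `conv S` admitting a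
supporting line with upward outward normal, or the leftmost or rightmost point)
iff there are no `u, v ∈ S` with `x(u) < x(p) < x(v)` and `p` strictly below the
segment `uv`. -/
theorem upper_hull_vertex_characterization
    (S : Finset (ℝ × ℝ))
    (hdistinct : ∀ p ∈ S, ∀ q ∈ S, p ≠ q → p.1 ≠ q.1)
    (hgen : ∀ p ∈ S, ∀ q ∈ S, ∀ r ∈ S, p ≠ q → q ≠ r → p ≠ r → cross p q r ≠ 0)
    (p : ℝ × ℝ) (hp : p ∈ S) :
    (((p ∉ convexHull ℝ ((S : Set (ℝ × ℝ)) \ {p})) ∧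
        ∃ m c : ℝ, p.2 = m * p.1 + c ∧ ∀ q ∈ S, q.2 ≤ m * q.1 + c) ∨
      (∀ q ∈ S, p.1 ≤ q.1) ∨ (∀ q ∈ S, q.1 ≤ p.1)) ↔
    ¬ ∃ u ∈ S, ∃ v ∈ S, u.1 < p.1 ∧ p.1 < v.1 ∧ cross u v p < 0 := by
  
  constructor
  · rintro h ⟨u, hu, v, hv, hu1, hv1, hc⟩
    rcases h with ⟨_, m, c, hpc, hline⟩ | hL | hR
    · have h1 := hline u hu
      have h2 := hline v hv
      have key : 0 ≤ cross u v p := by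
        have e1 : 0 ≤ (m * u.1 + c - u.2) * (v.1 - p.1) :=
          mul_nonneg (by linarith) (by linarith)
        have e2 : 0 ≤ (m * v.1 + c - v.2) * (p.1 - u.1) :=
          mul_nonneg (by linarith) (by linarith)
        have hid : cross u v p = (m * u.1 + c - u.2) * (v.1 - p.1)
            + (m * v.1 + c - v.2) * (p.1 - u.1) := by
          simp only [cross]; linear_combination (v.1 - u.1) * hpc
        rw [hid]; exact add_nonneg e1 e2
      linarith
    · exact absurd (hL u hu) (by linarith)
    · exact absurd (hR v hv) (by linarith)
  · intro h
    push_neg at h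
    by_cases hR : ∀ q ∈ S, q.1 ≤ p.1
    · exact Or.inr (Or.inr hR)
    by_cases hL : ∀ q ∈ S, p.1 ≤ q.1
    · exact Or.inr (Or.inl hL)
    push_neg at hR hL
    obtain ⟨v, hv, hv1⟩ := hR
    obtain ⟨u, hu, hu1⟩ := hL
    -- choose v₀ maximizing slope among points right of p
    have hne : (S.filter (fun q => p.1 < q.1)).Nonempty :=
      ⟨v, Finset.mem_filter.2 ⟨hv, hv1⟩⟩
    obtain ⟨v₀, hv₀mem, hv₀max⟩ :=
      (S.filter (fun q => p.1 < q.1)).exists_max_image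
        (fun q => (q.2 - p.2) / (q.1 - p.1)) hne
    rw [Finset.mem_filter] at hv₀mem
    obtain ⟨hv₀S, hv₀1⟩ := hv₀mem
    set m : ℝ := (v₀.2 - p.2) / (v₀.1 - p.1) with hm
    set c : ℝ := p.2 - m * p.1 with hc
    have hv₀pos : (0:ℝ) < v₀.1 - p.1 := by linarith
    have hline : ∀ q ∈ S, q.2 ≤ m * q.1 + c := by
      intro q hq
      rcases lt_trichotomy q.1 p.1 with h1 | h1 | h1
      · have hcr := h q hq v₀ hv₀S h1 hv₀1
        have : (q.2 - p.2) * (v₀.1 - p.1) ≤ (v₀.2 - p.2) * (q.1 - p.1) := by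
          simp only [cross] at hcr; nlinarith
        have : q.2 - p.2 ≤ m * (q.1 - p.1) := by
          rw [hm, div_mul_eq_mul_div, le_div_iff₀ hv₀pos]
          linarith
        simp only [hc]; linarith
      · have : q = p := by
          by_contra hne'
          exact hdistinct q hq p hp hne' h1
        subst this; simp [hc]
      · have hs := hv₀max q (Finset.mem_filter.2 ⟨hq, h1⟩)
        have hqpos : (0:ℝ) < q.1 - p.1 := by linarith
        rw [div_le_div_iff₀ hqpos hv₀pos] at hs
        have : q.2 - p.2 ≤ m * (q.1 - p.1) := by
          rw [hm, div_mul_eq_mul_div, le_div_iff₀ hv₀pos]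
          linarith
        simp only [hc]; linarith
    have hpline : p.2 = m * p.1 + c := by simp [hc]
    refine Or.inl ⟨?_, m, c, hpline, hline⟩
    intro hmem
    have hset : (S : Set (ℝ × ℝ)) \ {p} = ((S.erase p : Finset (ℝ × ℝ)) : Set (ℝ × ℝ)) := by
      simp [Finset.coe_erase]
    rw [hset, Finset.mem_convexHull'] at hmem
    obtain ⟨w, hw0, hw1, hwsum⟩ := hmem
    -- components
    have hx : ∑ q ∈ S.erase p, w q * q.1 = p.1 := by
      have := congrArg Prod.fst hwsum
      simpa [Prod.fst_sum] using this
    have hy : ∑ q ∈ S.erase p, w q * q.2 = p.2 := by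
      have := congrArg Prod.snd hwsum
      simpa [Prod.snd_sum] using this
    -- each term of ∑ w q * (m*q.1 + c - q.2) is ≥ 0 and the sum is 0
    have hsum0 : ∑ q ∈ S.erase p, w q * (m * q.1 + c - q.2) = 0 := by
      have : ∑ q ∈ S.erase p, w q * (m * q.1 + c - q.2)
          = m * (∑ q ∈ S.erase p, w q * q.1) + c * (∑ q ∈ S.erase p, w q)
            - ∑ q ∈ S.erase p, w q * q.2 := by
        simp only [Finset.mul_sum, ← Finset.sum_add_distrib, ← Finset.sum_sub_distrib]
        exact Finset.sum_congr rfl fun q _ => by ring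
      rw [this, hx, hy, hw1, hpline]; ring
    have hterm : ∀ q ∈ S.erase p, w q * (m * q.1 + c - q.2) = 0 :=
      (Finset.sum_eq_zero_iff_of_nonneg (fun q hq =>
        mul_nonneg (hw0 q hq)
          (by linarith [hline q (Finset.mem_of_mem_erase hq)]))).1 hsum0
    -- points with positive weight lie on the line
    have honline : ∀ q ∈ S.erase p, w q ≠ 0 → q.2 = m * q.1 + c := by
      intro q hq hwq
      have := hterm q hq
      rcases mul_eq_zero.1 this with h' | h'
      · exact absurd h' hwq
      · linarith
    -- at most one such point
    obtain ⟨q₀, hq₀, hwq₀⟩ : ∃ q ∈ S.erase p, w q ≠ 0 := by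
      by_contra hno
      push_neg at hno
      have : ∑ q ∈ S.erase p, w q = 0 := Finset.sum_eq_zero hno
      rw [hw1] at this; norm_num at this
    have huniq : ∀ q ∈ S.erase p, w q ≠ 0 → q = q₀ := by
      intro q hq hwq
      by_contra hne'
      have hq₀S := Finset.mem_of_mem_erase hq₀
      have hqS := Finset.mem_of_mem_erase hq
      have hqp : q ≠ p := (Finset.mem_erase.1 hq).1
      have hq₀p : q₀ ≠ p := (Finset.mem_erase.1 hq₀).1
      have e1 := honline q hq hwq
      have e2 := honline q₀ hq₀ hwq₀
      apply hgen p hp q hqS q₀ hq₀S (Ne.symm hqp) hne' (Ne.symm hq₀p)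
      simp only [cross]
      rw [e1, e2, hpline]; ring
    -- hence p.1 = q₀.1
    have hwq₀1 : w q₀ = 1 := by
      rw [← hw1]
      rw [Finset.sum_eq_single q₀]
      · intro q hq hne'
        by_contra hwq
        exact hne' (huniq q hq hwq)
      · intro h'; exact absurd hq₀ h'
    have hx' : p.1 = q₀.1 := by
      rw [← hx, Finset.sum_eq_single q₀]
      · rw [hwq₀1]; ring
      · intro q hq hne'
        rcases eq_or_ne (w q) 0 with h' | h'
        · rw [h', zero_mul]
        · exact absurd (huniq q hq h') hne'
      · intro h'; exact absurd hq₀ h'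
    exact hdistinct q₀ (Finset.mem_of_mem_erase hq₀) p hp (Finset.mem_erase.1 hq₀).1 hx'.symm
end
end
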